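/- arXiv:2012.05275 — 3 statements merged into one kernel-verified Lean document; each statement's English description precedes it below -/
import Mathlib

section
/- The binary word 1^b 0^a (b ones followed by a zeros, with a,b ≥ 1) requires exactly a+b-1 applications of the flip operator to be sorted into 0^a 1^b; that is, F^{a+b-1}(1^b 0^a) = 0^a 1^b and F^t(1^b 0^a) ≠ 0^a 1^b for all t < a+b-1. -/
/-- Flip operator `F`: simultaneously reverse every (automatically pairwise disjoint)
`10` factor, i.e. every zero immediately preceded by a one swaps with that one.
Here `false` plays the role of `0` and `true` of `1`. -/
def flipWord : List Bool → List Bool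
  | true :: false :: rest => false :: true :: flipWord rest
  | a :: rest => a :: flipWord rest
  | [] => []

/-- The positions (indices) of the zeros (`false`) of a binary word, left to right. -/
def zeroPositions (w : List Bool) : List ℕ :=
  (List.range w.length).filter (fun i => w.getD i true = false)

/-- `u ⊴ v` : for every `i`, the `i`-th zero of `u` occurs at a position at most
that of the `i`-th zero of `v`. -/
def WLE (u v : List Bool) : Prop :=
  List.Forall₂ (· ≤ ·) (zeroPositions u) (zeroPositions v)

/-- One tumble move: choose pairwise non-overlapping factors of the form `1^+0^+`
covering every `10` factor, and reverse each in place. `Tumble w u` means `u ∈ T(w)`. -/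
inductive Tumble : List Bool → List Bool → Prop
  | nil : Tumble [] []
  | zero {w u} : Tumble w u → Tumble (false :: w) (false :: u)
  | one {w u} : Tumble w u → w.head? ≠ some false → Tumble (true :: w) (true :: u)
  | block {w u} (a b : ℕ) : 0 < a → 0 < b → Tumble w u →
      Tumble (List.replicate a true ++ List.replicate b false ++ w)
             (List.replicate b false ++ List.replicate a true ++ u)

/-- `TumbleN t w u` : `u` is reachable from `w` by exactly `t` tumble moves. -/
def TumbleN : ℕ → List Bool → List Bool → Prop
  | 0 => Eq
  | t + 1 => fun w u => ∃ v, TumbleN t w v ∧ Tumble v u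

/-- The 0/1 projection at threshold `k`: the `i`-th letter is `0` iff `w(i) < k`. -/
def proj (k : ℕ) (w : List ℕ) : List Bool := w.map (fun x => decide (k ≤ x))

/-- Pop-stack operator `P`: partition into maximal strictly decreasing runs and
reverse each run in place. -/
def popStack (w : List ℕ) : List ℕ :=
  ((w.splitBy (fun a b => decide (b < a))).map List.reverse).flatten


/-- `(01)^k` -/
def altW : ℕ → List Bool
  | 0 => []
  | k+1 => false :: true :: altW k

lemma flip_false_cons (w : List Bool) : flipWord (false :: w) = false :: flipWord w := rfl
lemma flip_TF (w : List Bool) : flipWord (true :: false :: w) = false :: true :: flipWord w := rfl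
lemma flip_TT (w : List Bool) : flipWord (true :: true :: w) = true :: flipWord (true :: w) := rfl

lemma flip_rep_false (p : ℕ) (w : List Bool) :
    flipWord (List.replicate p false ++ w) = List.replicate p false ++ flipWord w := by
  induction p with
  | zero => simp
  | succ n ih => simp [List.replicate_succ, flip_false_cons, ih]

lemma rep_shift (n : ℕ) (x : Bool) (l : List Bool) :
    List.replicate n x ++ x :: l = x :: (List.replicate n x ++ l) := by
  induction n with
  | zero => rfl
  | succ m ih => simp [List.replicate_succ, ih]

lemma flip_rep_true (q : ℕ) : flipWord (List.replicate q true) = List.replicate q true := by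
  induction q with
  | zero => rfl
  | succ n ih =>
    cases n with
    | zero => rfl
    | succ m =>
      show flipWord (true :: true :: List.replicate m true) = _
      rw [flip_TT]
      show true :: flipWord (List.replicate (m+1) true) = _
      rw [ih]
      rfl

lemma flip_rep_false' (d : ℕ) :
    flipWord (List.replicate d false) = List.replicate d false := by
  simpa [show flipWord [] = [] from rfl] using flip_rep_false d []

lemma flipA (c : ℕ) (w : List Bool) :
    flipWord (List.replicate c true ++ true :: false :: w)
      = List.replicate c true ++ false :: true :: flipWord w := by
  induction c with
  | zero => simp [flip_TF]
  | succ n ih =>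
    have hhead : flipWord (true :: (List.replicate n true ++ true :: false :: w))
        = true :: flipWord (List.replicate n true ++ true :: false :: w) := by
      cases n with
      | zero => exact flip_TT (false :: w)
      | succ m => exact flip_TT _
    rw [List.replicate_succ, List.cons_append, hhead, ih, List.cons_append]

lemma flipM (j d : ℕ) :
    flipWord (true :: altW j ++ List.replicate (d+1) false)
      = altW (j+1) ++ List.replicate d false := by
  induction j with
  | zero => simp [altW, List.replicate_succ, flip_TF, flip_rep_false']
  | succ n ih =>
    show flipWord (true :: false :: (true :: altW n ++ List.replicate (d+1) false)) = _
    rw [flip_TF, ih]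
    rfl

lemma flipN (j s : ℕ) :
    flipWord (true :: altW j ++ List.replicate s true)
      = altW j ++ List.replicate (s+1) true := by
  induction j with
  | zero =>
    show flipWord (List.replicate (s+1) true) = _
    rw [flip_rep_true]; simp [altW]
  | succ n ih =>
    show flipWord (true :: false :: (true :: altW n ++ List.replicate s true)) = _
    rw [flip_TF, ih]
    rfl

lemma flipL1 (c k d : ℕ) :
    flipWord (List.replicate (c+1) true ++ altW k ++ List.replicate (d+1) false)
      = List.replicate c true ++ altW (k+1) ++ List.replicate d false := by
  cases k with
  | zero =>
    have : List.replicate (c+1) true ++ altW 0 ++ List.replicate (d+1) false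
        = List.replicate c true ++ true :: false :: List.replicate d false := by
      simp [altW, List.replicate_succ, rep_shift]
    rw [this, flipA, flip_rep_false']
    simp [altW]
  | succ n =>
    have : List.replicate (c+1) true ++ altW (n+1) ++ List.replicate (d+1) false
        = List.replicate c true ++ true :: false :: (true :: altW n ++ List.replicate (d+1) false) := by
      simp [altW, List.replicate_succ, rep_shift]
    rw [this, flipA, flipM]
    simp [altW]

lemma flipL2 (c k s : ℕ) :
    flipWord (List.replicate (c+1) true ++ altW (k+1) ++ List.replicate s true)
      = List.replicate c true ++ altW (k+1) ++ List.replicate (s+1) true := by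
  have : List.replicate (c+1) true ++ altW (k+1) ++ List.replicate s true
      = List.replicate c true ++ true :: false :: (true :: altW k ++ List.replicate s true) := by
    simp [altW, List.replicate_succ, rep_shift]
  rw [this, flipA, flipN]
  simp [altW]

lemma flipL3 (p k q : ℕ) :
    flipWord (List.replicate p false ++ altW (k+1) ++ List.replicate q true)
      = List.replicate (p+1) false ++ altW k ++ List.replicate (q+1) true := by
  have : List.replicate p false ++ altW (k+1) ++ List.replicate q true
      = List.replicate p false ++ (false :: (true :: altW k ++ List.replicate q true)) := by
    simp [altW]
  rw [this, flip_rep_false, flip_false_cons, flipN]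
  simp [List.replicate_succ, rep_shift]

lemma flipL4 (p k d : ℕ) :
    flipWord (List.replicate p false ++ altW (k+1) ++ List.replicate (d+1) false)
      = List.replicate (p+1) false ++ altW (k+1) ++ List.replicate d false := by
  have : List.replicate p false ++ altW (k+1) ++ List.replicate (d+1) false
      = List.replicate p false ++ (false :: (true :: altW k ++ List.replicate (d+1) false)) := by
    simp [altW]
  rw [this, flip_rep_false, flip_false_cons, flipM]
  simp [List.replicate_succ, rep_shift]

lemma phase1 (a b t : ℕ) (hta : t ≤ a) (htb : t ≤ b) :
    flipWord^[t] (List.replicate b true ++ List.replicate a false)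
      = List.replicate (b-t) true ++ altW t ++ List.replicate (a-t) false := by
  induction t with
  | zero => simp [altW]
  | succ n ih =>
    rw [Function.iterate_succ_apply', ih (by omega) (by omega)]
    have h1 : b - n = (b - (n+1)) + 1 := by omega
    have h2 : a - n = (a - (n+1)) + 1 := by omega
    rw [h1, h2, flipL1]

lemma traj (a b : ℕ) (ha : 1 ≤ a) (hb : 1 ≤ b) :
    flipWord^[a + b - 2] (List.replicate b true ++ List.replicate a false)
      = List.replicate (a-1) false ++ true :: false :: List.replicate (b-1) true := by
  rcases le_or_gt a b with hab | hab
  · -- a ≤ b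
    have phase2 : ∀ s, s ≤ b - a →
        flipWord^[a+s] (List.replicate b true ++ List.replicate a false)
          = List.replicate (b-a-s) true ++ altW a ++ List.replicate s true := by
      intro s hs
      induction s with
      | zero =>
        simpa using phase1 a b a le_rfl hab
      | succ n ih =>
        rw [← Nat.add_assoc, Function.iterate_succ_apply', ih (by omega)]
        have h1 : b - a - n = (b - a - (n+1)) + 1 := by omega
        have h2 : a = (a-1) + 1 := by omega
        rw [h1, h2, flipL2, ← h2]
    rcases Nat.lt_or_ge a 2 with ha2 | ha2
    · -- a = 1
      have ha1 : a = 1 := by omega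
      subst ha1
      rcases Nat.lt_or_ge b 2 with hb2 | hb2
      · have hb1 : b = 1 := by omega
        subst hb1
        simp
      · have h := phase2 (b-2) (by omega)
        have ht : 1 + b - 2 = 1 + (b - 2) := by omega
        rw [ht, h]
        have : b - 1 - (b-2) = 1 := by omega
        rw [this]
        have : b - 1 = (b - 2) + 1 := by omega
        rw [this]
        simp [altW, List.replicate_succ, rep_shift]
    · -- a ≥ 2 : phase 3
      have phase3 : ∀ s, s ≤ a - 1 →
          flipWord^[b+s] (List.replicate b true ++ List.replicate a false)
            = List.replicate s false ++ altW (a-s) ++ List.replicate (b-a+s) true := by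
        intro s hs
        induction s with
        | zero =>
          have h := phase2 (b-a) le_rfl
          have ht : a + (b - a) = b + 0 := by omega
          rw [ht] at h
          rw [h]
          simp
        | succ n ih =>
          rw [← Nat.add_assoc, Function.iterate_succ_apply', ih (by omega)]
          have h1 : a - n = (a - (n+1)) + 1 := by omega
          rw [h1, flipL3]
          congr 2
      have h := phase3 (a-2) (by omega)
      have ht : a + b - 2 = b + (a - 2) := by omega
      rw [ht, h]
      have h1 : a - (a-2) = 2 := by omega
      have h2 : b - a + (a-2) = b - 2 := by omega
      have h3 : a - 1 = (a-2) + 1 := by omega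
      have h4 : b - 1 = (b-2) + 1 := by omega
      rw [h1, h2, h3, h4]
      simp [altW, List.replicate_succ, rep_shift]
  · -- b < a
    have phase2 : ∀ s, s ≤ a - b →
        flipWord^[b+s] (List.replicate b true ++ List.replicate a false)
          = List.replicate s false ++ altW b ++ List.replicate (a-b-s) false := by
      intro s hs
      induction s with
      | zero =>
        simpa using phase1 a b b (by omega) le_rfl
      | succ n ih =>
        rw [← Nat.add_assoc, Function.iterate_succ_apply', ih (by omega)]
        have h1 : a - b - n = (a - b - (n+1)) + 1 := by omega
        have h2 : b = (b-1) + 1 := by omega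
        rw [h1, h2, flipL4, ← h2]
    rcases Nat.lt_or_ge b 2 with hb2 | hb2
    · -- b = 1
      have hb1 : b = 1 := by omega
      subst hb1
      have h := phase2 (a-2) (by omega)
      have ht : a + 1 - 2 = 1 + (a - 2) := by omega
      rw [ht, h]
      have : a - 1 - (a-2) = 1 := by omega
      rw [this]
      have : a - 1 = (a - 2) + 1 := by omega
      rw [this]
      simp [altW, List.replicate_succ, rep_shift]
    · -- b ≥ 2 : phase 3
      have phase3 : ∀ s, s ≤ b - 1 →
          flipWord^[a+s] (List.replicate b true ++ List.replicate a false)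
            = List.replicate (a-b+s) false ++ altW (b-s) ++ List.replicate s true := by
        intro s hs
        induction s with
        | zero =>
          have h := phase2 (a-b) le_rfl
          have ht : b + (a - b) = a + 0 := by omega
          rw [ht] at h
          rw [h]
          simp
        | succ n ih =>
          rw [← Nat.add_assoc, Function.iterate_succ_apply', ih (by omega)]
          have h1 : b - n = (b - (n+1)) + 1 := by omega
          rw [h1, flipL3]
          congr 2
      have h := phase3 (b-2) (by omega)
      have ht : a + b - 2 = a + (b - 2) := by omega
      rw [ht, h]
      have h1 : b - (b-2) = 2 := by omega
      have h2 : a - b + (b-2) = a - 2 := by omega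
      have h3 : a - 1 = (a-2) + 1 := by omega
      have h4 : b - 1 = (b-2) + 1 := by omega
      rw [h1, h2, h3, h4]
      simp [altW, List.replicate_succ, rep_shift]

lemma flip_sorted (a b : ℕ) :
    flipWord (List.replicate a false ++ List.replicate b true)
      = List.replicate a false ++ List.replicate b true := by
  rw [flip_rep_false, flip_rep_true]

/-- `1^b 0^a` requires exactly `a+b-1` flips to sort. -/
theorem stmt1 (a b : ℕ) (ha : 1 ≤ a) (hb : 1 ≤ b) :
    flipWord^[a + b - 1] (List.replicate b true ++ List.replicate a false)
      = List.replicate a false ++ List.replicate b true ∧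
    ∀ t < a + b - 1,
      flipWord^[t] (List.replicate b true ++ List.replicate a false)
        ≠ List.replicate a false ++ List.replicate b true := by
  have htraj := traj a b ha hb
  constructor
  · have h1 : a + b - 1 = (a + b - 2) + 1 := by omega
    rw [h1, Function.iterate_succ_apply', htraj, flip_rep_false, flip_TF, flip_rep_true]
    have h2 : a = (a-1) + 1 := by omega
    have h3 : b = (b-1) + 1 := by omega
    rw [h2, h3]
    simp [List.replicate_succ, rep_shift]
  · intro t ht heq
    have hfix : flipWord^[a+b-2-t] (List.replicate a false ++ List.replicate b true)
        = List.replicate a false ++ List.replicate b true :=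
      Function.iterate_fixed (flip_sorted a b) _
    have hkey : flipWord^[a+b-2] (List.replicate b true ++ List.replicate a false)
        = List.replicate a false ++ List.replicate b true := by
      have h : a + b - 2 = (a + b - 2 - t) + t := by omega
      rw [h, Function.iterate_add_apply, heq, hfix]
    rw [htraj] at hkey
    have h2 : a = (a-1) + 1 := by omega
    rw [h2, List.replicate_succ'] at hkey
    simp [List.append_assoc] at hkey
end

section
/- For every permutation π of length n and every integer 0 ≤ k ≤ n, the 0/1-projection of P(π) at threshold k is obtainable from the 0/1-projection of π at threshold k by one tumble move; that is, P(π)|_k ∈ T(π|_k). -/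
open List

lemma Tumble.replicate_false_append {w u : List Bool} (b : ℕ) (h : Tumble w u) :
    Tumble (replicate b false ++ w) (replicate b false ++ u) := by
  induction b with
  | zero => simpa using h
  | succ b ih => simpa [replicate_succ] using ih.zero

lemma Tumble.replicate_true_append {w u : List Bool} (a : ℕ) (h : Tumble w u)
    (hw : w.head? ≠ some false) :
    Tumble (replicate a true ++ w) (replicate a true ++ u) := by
  induction a with
  | zero => simpa using h
  | succ a ih =>
    refine ih.one ?_
    cases a <;> simp [replicate_succ, hw]

lemma exists_eq_replicate_true_append_replicate_false {w : List Bool}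
    (hw : w.IsChain (· ≥ ·)) : ∃ a b, w = replicate a true ++ replicate b false := by
  induction w with
  | nil => exact ⟨0, 0, rfl⟩
  | cons x w ih =>
    obtain ⟨a, b, rfl⟩ := ih hw.tail
    cases x
    · obtain rfl : a = 0 := by
        by_contra ha
        obtain ⟨a, rfl⟩ := Nat.exists_eq_succ_of_ne_zero ha
        simp [replicate_succ] at hw
        exact absurd hw.1 (by decide)
      exact ⟨0, b + 1, by simp [replicate_succ]⟩
    · exact ⟨a + 1, b, by simp [replicate_succ]⟩

theorem tumble_flatten_map_reverse {ws : List (List Bool)} (hblock : ∀ w ∈ ws, w.IsChain (· ≥ ·))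
    (hjoin : ws.IsChain fun w w' => ∃ hw hw', w.getLast hw ≤ w'.head hw') :
    Tumble ws.flatten (ws.map reverse).flatten := by
  induction ws with
  | nil => exact .nil
  | cons w ws ih =>
    have hrest : Tumble ws.flatten (ws.map reverse).flatten :=
      ih (fun w' hw' => hblock w' (mem_cons_of_mem _ hw')) hjoin.tail
    obtain ⟨a, b, rfl⟩ := exists_eq_replicate_true_append_replicate_false (hblock w mem_cons_self)
    simp only [flatten_cons, map_cons, reverse_append, reverse_replicate, append_assoc]
    rcases Nat.eq_zero_or_pos a with rfl | ha
    · simpa using hrest.replicate_false_append b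
    rcases Nat.eq_zero_or_pos b with rfl | hb
    · simp only [replicate_zero, nil_append]
      refine hrest.replicate_true_append a ?_
      cases ws with
      | nil => simp
      | cons w' ws =>
        obtain ⟨⟨hw, hw', hle⟩, -⟩ := isChain_cons_cons.mp hjoin
        obtain ⟨x, w', rfl⟩ := exists_cons_of_ne_nil hw'
        have hx : true ≤ x := by simpa [getLast_replicate, ha.ne'] using hle
        simp [Bool.le_iff_imp.mp hx rfl]
    · simpa [append_assoc] using hrest.block a b ha hb

lemma proj_flatten (k : ℕ) (L : List (List ℕ)) : proj k L.flatten = (L.map (proj k)).flatten :=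
  map_flatten

lemma proj_reverse (k : ℕ) (w : List ℕ) : proj k w.reverse = (proj k w).reverse :=
  map_reverse

lemma monotone_decide_le (k : ℕ) : Monotone fun x : ℕ => decide (k ≤ x) :=
  fun _ _ hxy => Bool.le_iff_imp.mpr fun hx => decide_eq_true ((of_decide_eq_true hx).trans hxy)

theorem stmt7_general (k : ℕ) (π : List ℕ) :
    Tumble (proj k π) (proj k (popStack π)) := by
  set runs := π.splitBy fun a b => decide (b < a)
  have hπ : proj k π = (runs.map (proj k)).flatten := by
    rw [← proj_flatten, flatten_splitBy]
  have hP : proj k (popStack π) = ((runs.map (proj k)).map reverse).flatten := by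
    rw [popStack, proj_flatten, map_map, map_map]
    exact congrArg (fun f => (runs.map f).flatten) (funext (proj_reverse k))
  rw [hπ, hP]
  apply tumble_flatten_map_reverse
  · rw [forall_mem_map]
    intro c hc
    exact (isChain_map _).mpr <| (isChain_of_mem_splitBy hc).imp fun x y hxy =>
      monotone_decide_le k (show y < x by simpa using hxy).le
  · rw [isChain_map]
    refine (isChain_getLast_head_splitBy _ π).imp fun c d ⟨hc, hd, h⟩ => ?_
    have hcd : c.getLast hc ≤ d.head hd := by simpa using h
    exact ⟨by simpa [proj] using hc, by simpa [proj] using hd,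
      by simpa [proj, getLast_map, head_map] using monotone_decide_le k hcd⟩

/-- For every permutation `π` of length `n` and `0 ≤ k ≤ n`, `P(π)|ₖ ∈ T(π|ₖ)`. -/
theorem stmt7 (n k : ℕ) (π : List ℕ) (h : π.Perm (List.range' 1 n)) (hk : k ≤ n) :
    Tumble (proj k π) (proj k (popStack π)) :=
  stmt7_general k π
end

section
/- The pop-stack operator P sorts a permutation in one pass if and only if the permutation is layered, i.e., avoids both patterns 231 and 312: P(π) is the identity iff π contains no indices i<j<k with π(k)<π(i)<π(j) and no indices i<j<k with π(j)<π(k)<π(i). -/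
namespace List

variable {α : Type*}

theorem exists_getD_iff_exists_sublist (l : List α) (d : α) (P : α → α → α → Prop) :
    (∃ i j k, i < j ∧ j < k ∧ k < l.length ∧ P (l.getD i d) (l.getD j d) (l.getD k d)) ↔
      ∃ x y z, [x, y, z] <+ l ∧ P x y z := by
  constructor
  · rintro ⟨i, j, k, hij, hjk, hk, hP⟩
    have hsub := map_getElem_sublist (l := l)
      (is := [⟨i, by omega⟩, ⟨j, by omega⟩, ⟨k, hk⟩]) (by simp [← Fin.val_fin_lt]; omega)
    refine ⟨_, _, _, hsub, ?_⟩
    simpa [getD_eq_getElem, show i < l.length by omega, show j < l.length by omega, hk] using hP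
  · rintro ⟨x, y, z, hsub, hP⟩
    obtain ⟨is, his, hlt⟩ := sublist_eq_map_getElem hsub
    match is, his, hlt with
    | [i, j, k], his, hlt =>
      simp only [map_cons, map_nil, cons.injEq] at his
      simp only [pairwise_cons, mem_cons, forall_eq_or_imp] at hlt
      refine ⟨i, j, k, hlt.1.1, hlt.2.1.1, k.isLt, ?_⟩
      simpa [getD_eq_getElem, his] using hP

theorem sublist_triple_append {x y z : α} {l₁ l₂ : List α} (h : [x, y, z] <+ l₁ ++ l₂) :
    [x, y, z] <+ l₁ ∨ ([x, y] <+ l₁ ∧ z ∈ l₂) ∨ (x ∈ l₁ ∧ [y, z] <+ l₂) ∨ [x, y, z] <+ l₂ := by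
  obtain ⟨u, v, huv, hu, hv⟩ := sublist_append_iff.1 h
  match u, huv with
  | [], huv => exact .inr (.inr (.inr (huv ▸ hv)))
  | [_], huv =>
    simp only [cons_append, nil_append, cons.injEq] at huv
    obtain ⟨rfl, rfl⟩ := huv
    exact .inr (.inr (.inl ⟨singleton_sublist.1 hu, hv⟩))
  | [_, _], huv =>
    simp only [cons_append, nil_append, cons.injEq] at huv
    obtain ⟨rfl, rfl, rfl⟩ := huv
    exact .inr (.inl ⟨hu, singleton_sublist.1 hv⟩)
  | [_, _, _], huv =>
    simp only [cons_append, nil_append, cons.injEq] at huv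
    obtain ⟨rfl, rfl, rfl, rfl⟩ := huv
    exact .inl hu
  | _ :: _ :: _ :: _ :: _, huv => simpa using congrArg length huv

variable [LinearOrder α]

def Contains231 (l : List α) : Prop := ∃ x y z, [x, y, z] <+ l ∧ z < x ∧ x < y

def Contains312 (l : List α) : Prop := ∃ x y z, [x, y, z] <+ l ∧ y < z ∧ z < x

theorem Contains231.mono {l₁ l₂ : List α} (h : l₁ <+ l₂) : l₁.Contains231 → l₂.Contains231 :=
  fun ⟨x, y, z, hs, hp⟩ => ⟨x, y, z, hs.trans h, hp⟩

theorem Contains312.mono {l₁ l₂ : List α} (h : l₁ <+ l₂) : l₁.Contains312 → l₂.Contains312 :=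
  fun ⟨x, y, z, hs, hp⟩ => ⟨x, y, z, hs.trans h, hp⟩

inductive IsLayered : List α → Prop
  | nil : IsLayered []
  | append {d l : List α} : d.Pairwise (· > ·) → (∀ x ∈ d, ∀ y ∈ l, x < y) → IsLayered l →
      IsLayered (d ++ l)

theorem isLayered_flatten {L : List (List α)} (hd : ∀ d ∈ L, d.Pairwise (· > ·))
    (hsep : L.Pairwise fun d e => ∀ x ∈ d, ∀ y ∈ e, x < y) : L.flatten.IsLayered := by
  induction L with
  | nil => exact .nil
  | cons d L ih =>
    rw [pairwise_cons] at hsep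
    exact .append (hd d mem_cons_self)
      (fun x hx y hy => let ⟨e, he, hy⟩ := mem_flatten.1 hy; hsep.1 e he x hx y hy)
      (ih (fun e he => hd e (mem_cons_of_mem d he)) hsep.2)

theorem IsLayered.not_contains231 {l : List α} (h : l.IsLayered) : ¬ l.Contains231 := by
  induction h with
  | nil => rintro ⟨x, y, z, hs, -⟩; simp at hs
  | @append d l hd hsep _ ih =>
    rintro ⟨x, y, z, hs, hzx, hxy⟩
    rcases sublist_triple_append hs with hs | ⟨hs, -⟩ | ⟨hx, hs⟩ | hs
    · have hxy' := pairwise_iff_forall_sublist.1 hd ((show [x, y] <+ [x, y, z] by simp).trans hs)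
      exact hxy'.not_gt hxy
    · exact (pairwise_iff_forall_sublist.1 hd hs).not_gt hxy
    · exact (hsep x hx z (hs.subset (by simp))).not_gt hzx
    · exact ih ⟨x, y, z, hs, hzx, hxy⟩

theorem IsLayered.not_contains312 {l : List α} (h : l.IsLayered) : ¬ l.Contains312 := by
  induction h with
  | nil => rintro ⟨x, y, z, hs, -⟩; simp at hs
  | @append d l hd hsep _ ih =>
    rintro ⟨x, y, z, hs, hyz, hzx⟩
    rcases sublist_triple_append hs with hs | ⟨hs, hz⟩ | ⟨hx, hs⟩ | hs
    · have hyz' := pairwise_iff_forall_sublist.1 hd ((show [y, z] <+ [x, y, z] by simp).trans hs)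
      exact hyz'.not_gt hyz
    · exact (hsep x (hs.subset (by simp)) z hz).not_gt hzx
    · exact (hsep x hx z (hs.subset (by simp))).not_gt hzx
    · exact ih ⟨x, y, z, hs, hyz, hzx⟩

theorem lt_of_mem_dropWhile_of_not_contains231 {a y : α} {t : List α} (hnd : (a :: t).Nodup)
    (h231 : ¬ (a :: t).Contains231) (hy : y ∈ t.dropWhile (· < a)) : a < y := by
  obtain ⟨b, t₂, hbt⟩ := exists_cons_of_ne_nil (ne_nil_of_mem hy)
  have hb : ¬ b < a := by simpa [hbt] using head_dropWhile_not (· < a) (l := t) (by simp [hbt])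
  have hsub : b :: t₂ <+ t := hbt ▸ dropWhile_sublist _
  have hne : ∀ x ∈ t, x ≠ a := fun x hx hxa => (nodup_cons.1 hnd).1 (hxa ▸ hx)
  have hab : a < b := lt_of_le_of_ne (not_lt.1 hb) (hne b (hsub.subset mem_cons_self)).symm
  rw [hbt, mem_cons] at hy
  rcases hy with rfl | hy
  · exact hab
  · by_contra hya
    have hya : y < a := lt_of_le_of_ne (not_lt.1 hya) (hne y (hsub.subset (mem_cons_of_mem _ hy)))
    exact h231 ⟨a, b, y, (((singleton_sublist.2 hy).cons_cons b).trans hsub).cons_cons a, hya, hab⟩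

theorem pairwise_gt_cons_takeWhile {a : α} {t : List α} (hnd : (a :: t).Nodup)
    (h312 : ¬ (a :: t).Contains312) : (a :: t.takeWhile (· < a)).Pairwise (· > ·) := by
  have hsmall : ∀ x ∈ t.takeWhile (· < a), x < a := fun x hx => by
    simpa using mem_takeWhile_imp hx
  refine pairwise_cons.2 ⟨hsmall, pairwise_iff_forall_sublist.2 fun {p q} hpq => ?_⟩
  have hpq' : [p, q] <+ t := hpq.trans (takeWhile_sublist _)
  have hne : p ≠ q := pairwise_iff_forall_sublist.1 (nodup_cons.1 hnd).2 hpq'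
  refine lt_of_le_of_ne (not_lt.1 fun hpq_lt => h312 ?_) hne.symm
  exact ⟨a, p, q, hpq'.cons_cons a, hpq_lt, hsmall q (hpq.subset (by simp))⟩

theorem isLayered_of_not_contains {l : List α} (hnd : l.Nodup) (h231 : ¬ l.Contains231)
    (h312 : ¬ l.Contains312) : l.IsLayered := by
  match l with
  | [] => exact .nil
  | a :: t =>
    have hsub : t.dropWhile (· < a) <+ a :: t := (dropWhile_sublist _).trans (sublist_cons_self a t)
    have hrest : (t.dropWhile (· < a)).IsLayered :=
      isLayered_of_not_contains (hnd.sublist hsub) (fun h => h231 (h.mono hsub))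
        (fun h => h312 (h.mono hsub))
    have hsplit : a :: t = (a :: t.takeWhile (· < a)) ++ t.dropWhile (· < a) := by
      rw [cons_append, takeWhile_append_dropWhile]
    have hd := pairwise_gt_cons_takeWhile hnd h312
    rw [hsplit]
    refine .append hd (fun x hx y hy => ?_) hrest
    have hxa : x ≤ a := by
      rcases mem_cons.1 hx with rfl | hx
      · exact le_rfl
      · exact ((pairwise_cons.1 hd).1 x hx).le
    exact hxa.trans_lt (lt_of_mem_dropWhile_of_not_contains231 hnd h231 hy)
termination_by l.length
decreasing_by simpa using Nat.lt_succ_of_le (length_dropWhile_le _ _)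

theorem isLayered_iff_not_contains {l : List α} (hnd : l.Nodup) :
    l.IsLayered ↔ ¬ l.Contains231 ∧ ¬ l.Contains312 :=
  ⟨fun h => ⟨h.not_contains231, h.not_contains312⟩,
    fun ⟨h231, h312⟩ => isLayered_of_not_contains hnd h231 h312⟩

end List

open List

theorem popStack_perm (w : List ℕ) : popStack w ~ w := by
  conv_rhs => rw [← flatten_splitBy (fun a b => decide (b < a)) w]
  exact Perm.flatten_congr (forall₂_map_left_iff.2 (forall₂_same.2 fun g _ => reverse_perm g))

theorem popStack_append {d w : List ℕ} (hd : d.Pairwise (· > ·))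
    (hdw : ∀ x ∈ d, ∀ y ∈ w, x < y) : popStack (d ++ w) = d.reverse ++ popStack w := by
  rcases eq_or_ne d [] with rfl | hne
  · simp
  have hsplit : (d ++ w).splitBy (fun a b => decide (b < a))
      = d :: w.splitBy (fun a b => decide (b < a)) := by
    rw [splitBy_append, splitBy_of_isChain hne]
    · rfl
    · exact hd.isChain.imp (by simp)
    · intro x hx y hy
      simpa using (hdw x (mem_of_mem_getLast? hx) y (mem_of_mem_head? hy)).le
  rw [popStack, hsplit]
  rfl

theorem IsLayered.pairwise_popStack {w : List ℕ} (h : w.IsLayered) :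
    (popStack w).Pairwise (· < ·) := by
  induction h with
  | nil => simp [popStack]
  | @append d w hd hdw _ ih =>
    rw [popStack_append hd hdw, pairwise_append, pairwise_reverse]
    exact ⟨hd, ih, fun x hx y hy => hdw x (mem_reverse.1 hx) y ((popStack_perm w).subset hy)⟩

theorem isLayered_of_pairwise_popStack {w : List ℕ} (h : (popStack w).Pairwise (· < ·)) :
    w.IsLayered := by
  rw [popStack, pairwise_flatten, pairwise_map] at h
  rw [← flatten_splitBy (fun a b => decide (b < a)) w]
  exact isLayered_flatten (fun d hd => pairwise_reverse.1 (h.1 _ (mem_map_of_mem hd)))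
    (h.2.imp fun hde x hx y hy => hde x (mem_reverse.2 hx) y (mem_reverse.2 hy))

theorem pairwise_popStack_iff_isLayered (w : List ℕ) :
    (popStack w).Pairwise (· < ·) ↔ w.IsLayered :=
  ⟨isLayered_of_pairwise_popStack, IsLayered.pairwise_popStack⟩

/-- `P` sorts `π` in one pass iff `π` avoids both `231` and `312`. -/
theorem stmt17 (n : ℕ) (π : List ℕ) (h : π.Perm (List.range' 1 n)) :
    popStack π = List.range' 1 n ↔
      (¬ ∃ i j k, i < j ∧ j < k ∧ k < π.length ∧
          π.getD k 0 < π.getD i 0 ∧ π.getD i 0 < π.getD j 0) ∧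
      (¬ ∃ i j k, i < j ∧ j < k ∧ k < π.length ∧
          π.getD j 0 < π.getD k 0 ∧ π.getD k 0 < π.getD i 0) := by
  rw [exists_getD_iff_exists_sublist π 0 fun x y z => z < x ∧ x < y,
    exists_getD_iff_exists_sublist π 0 fun x y z => y < z ∧ z < x]
  have hsorted : popStack π = range' 1 n ↔ (popStack π).Pairwise (· < ·) :=
    ⟨fun hp => hp ▸ pairwise_lt_range',
      fun hs => ((popStack_perm π).trans h).eq_of_pairwise' hs pairwise_lt_range'⟩
  exact hsorted.trans <| (pairwise_popStack_iff_isLayered π).trans <|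
    isLayered_iff_not_contains (h.nodup_iff.2 nodup_range')
end
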